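/- arXiv:2107.11513 — 2 statements merged into one kernel-verified Lean document; each statement's English description precedes it below -/
import Mathlib

section
/- Let F be ρ-weakly convex. For any points x, x', x̃ and subgradients v ∈ ∂F(x') and ṽ ∈ ∂F(x̃), one has −⟨x − x̃, v − ṽ⟩ ≤ F(x) − F(x') + (ρ/2)‖x − x̃‖² + (ρ/2)‖x' − x̃‖² − ⟨x − x', v⟩. -/
open RealInnerProductSpace

theorem delayed_hypomonotonicity
    {n : ℕ} (F : EuclideanSpace ℝ (Fin n) → ℝ) (ρ : ℝ)
    (x x' xt v vt : EuclideanSpace ℝ (Fin n))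
    (hv : ∀ y, F y ≥ F x' + ⟪v, y - x'⟫ - ρ / 2 * ‖y - x'‖ ^ 2)
    (hvt : ∀ y, F y ≥ F xt + ⟪vt, y - xt⟫ - ρ / 2 * ‖y - xt‖ ^ 2) :
    -⟪x - xt, v - vt⟫ ≤
      F x - F x' + ρ / 2 * ‖x - xt‖ ^ 2 + ρ / 2 * ‖x' - xt‖ ^ 2
        - ⟪x - x', v⟫ := by
  have h1 := hv xt
  have h2 := hvt x
  have e : ⟪x - xt, v - vt⟫
      = ⟪x - x', v⟫ - ⟪v, xt - x'⟫ - ⟪vt, x - xt⟫ := by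
    simp only [inner_sub_left, inner_sub_right, real_inner_comm v,
      real_inner_comm vt]
    ring
  have en : ‖x' - xt‖ = ‖xt - x'‖ := norm_sub_rev _ _
  rw [en]
  linarith [e]
end

section
/- Let t ∈ (0,1), and with π_{k,j}(t) = Σ_{l=0}^{min(τ_k−1, k−j−1)} t^{k−j−l−1} for delay τ_k ≤ τ, it holds Σ_{j=1}^{k−1} π_{k,j}(t)² ≤ τ/(1 − t)². -/
theorem pi_sum_sq_bound
    (t : ℝ) (ht : t ∈ Set.Ioo (0 : ℝ) 1)
    (k τk τ : ℕ) (hk : 2 ≤ k) (hτk1 : 1 ≤ τk) (hτk : τk ≤ τ) :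
    ∑ j ∈ Finset.Icc 1 (k - 1),
        (∑ l ∈ Finset.range (min τk (k - j)), t ^ (k - j - l - 1)) ^ 2 ≤
      (τ : ℝ) / (1 - t) ^ 2 := by
  obtain ⟨ht0, ht1⟩ := ht
  have h1t : (0:ℝ) < 1 - t := by linarith
  have hgeom : ∀ n : ℕ, ∑ i ∈ Finset.range n, t ^ i ≤ 1 / (1 - t) := by
    intro n
    have hm := geom_sum_mul t n
    rw [le_div_iff₀ h1t]
    nlinarith [pow_nonneg ht0.le n]
  set S : ℕ → ℝ := fun j => ∑ l ∈ Finset.range (min τk (k - j)), t ^ (k - j - l - 1)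
    with hS
  have hS0 : ∀ j, 0 ≤ S j := fun j =>
    Finset.sum_nonneg fun l _ => pow_nonneg ht0.le _
  have hS_le : ∀ j, S j ≤ 1 / (1 - t) := by
    intro j
    calc S j ≤ ∑ l ∈ Finset.range (k - j), t ^ (k - j - l - 1) :=
          Finset.sum_le_sum_of_subset_of_nonneg
            (Finset.range_subset_range.2 (min_le_right _ _))
            (fun i _ _ => pow_nonneg ht0.le _)
      _ = ∑ i ∈ Finset.range (k - j), t ^ i := by
          rw [← Finset.sum_range_reflect (fun i => t ^ i) (k - j)]
          apply Finset.sum_congr rfl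
          intro i _
          congr 1
          omega
      _ ≤ 1 / (1 - t) := hgeom _
  have hswap : ∑ j ∈ Finset.Icc 1 (k - 1), S j
      = ∑ l ∈ Finset.range τk, ∑ j ∈ Finset.Icc 1 (k - 1 - l), t ^ (k - j - l - 1) := by
    rw [hS]
    exact Finset.sum_comm' (by
      intro j l
      simp only [Finset.mem_Icc, Finset.mem_range, lt_min_iff]
      omega)
  have hcol : ∀ l, ∑ j ∈ Finset.Icc 1 (k - 1 - l), t ^ (k - j - l - 1) ≤ 1 / (1 - t) := by
    intro l
    calc ∑ j ∈ Finset.Icc 1 (k - 1 - l), t ^ (k - j - l - 1)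
        ≤ ∑ j ∈ Finset.range (k - 1 - l + 1), t ^ (k - j - l - 1) := by
          apply Finset.sum_le_sum_of_subset_of_nonneg
          · intro x hx
            simp only [Finset.mem_Icc] at hx
            simp only [Finset.mem_range]
            omega
          · exact fun i _ _ => pow_nonneg ht0.le _
      _ = ∑ i ∈ Finset.range (k - 1 - l + 1), t ^ i := by
          rw [← Finset.sum_range_reflect (fun i => t ^ i) (k - 1 - l + 1)]
          apply Finset.sum_congr rfl
          intro i hi
          simp only [Finset.mem_range] at hi
          congr 1
          omega
      _ ≤ 1 / (1 - t) := hgeom _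
  have hsum_le : ∑ j ∈ Finset.Icc 1 (k - 1), S j ≤ (τk : ℝ) / (1 - t) := by
    rw [hswap]
    calc ∑ l ∈ Finset.range τk, ∑ j ∈ Finset.Icc 1 (k - 1 - l), t ^ (k - j - l - 1)
        ≤ ∑ _l ∈ Finset.range τk, 1 / (1 - t) :=
          Finset.sum_le_sum fun l _ => hcol l
      _ = (τk : ℝ) / (1 - t) := by
          rw [Finset.sum_const, Finset.card_range, nsmul_eq_mul]
          ring
  calc ∑ j ∈ Finset.Icc 1 (k - 1), (S j) ^ 2
      ≤ ∑ j ∈ Finset.Icc 1 (k - 1), S j * (1 / (1 - t)) := by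
        apply Finset.sum_le_sum
        intro j _
        have h1 := hS_le j
        have h2 := hS0 j
        nlinarith
    _ = (∑ j ∈ Finset.Icc 1 (k - 1), S j) * (1 / (1 - t)) := by
        rw [Finset.sum_mul]
    _ ≤ ((τk : ℝ) / (1 - t)) * (1 / (1 - t)) := by
        apply mul_le_mul_of_nonneg_right hsum_le
        positivity
    _ = (τk : ℝ) / (1 - t) ^ 2 := by
        rw [div_mul_div_comm, mul_one, sq]
    _ ≤ (τ : ℝ) / (1 - t) ^ 2 := by
        have : (τk:ℝ) ≤ (τ:ℝ) := by exact_mod_cast hτk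
        gcongr
end
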